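/- For the cosmological hypermomentum Δ_{αμν} = φ h_{μα}u_ν + χ h_{να}u_μ + ψ u_α h_{μν} + ω u_α u_μ u_ν (no pseudoscalar part), with (n−1)φ − ω ≠ 0, Δ_{αμν} can be written as ĝ_{αμ}Δ_ν with Δ_ν = [(n−1)φ − ω]u_ν and ĝ_{μν} = [φ g_{μν} + (φ+ω)u_μu_ν]/[(n−1)φ − ω] if and only if χ = 0 and ψ = 0; in that case ĝ_{αμ}Δ_ν reproduces Δ_{αμν} exactly. -/

import Mathlib

open Finset in
/-- The cosmological hypermomentum
Δ_{αμν} = φ h_{μα}u_ν + χ h_{να}u_μ + ψ u_α h_{μν} + ω u_α u_μ u_ν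
(no pseudoscalar part) admits the disformal-dilatonic form Δ_{αμν} = ĝ_{αμ}Δ_ν
with Δ_ν = [(n−1)φ − ω]u_ν and
ĝ_{μν} = [φ g_{μν} + (φ+ω)u_μ u_ν]/[(n−1)φ − ω],
if and only if χ = 0 and ψ = 0, provided (n−1)φ − ω ≠ 0. -/
theorem dilatonic_hypermomentum_iff {ι : Type*} [Fintype ι] (n : ℕ)
    (g h ghat : ι → ι → ℝ) (u uup Δtr : ι → ℝ) (φ χ ψ ω : ℝ)
    (hgsym : ∀ a b, g a b = g b a)
    (hhsym : ∀ a b, h a b = h b a)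
    (hh : ∀ a b, h a b = g a b + u a * u b)
    (hnorm : ∑ a, uup a * u a = -1)
    (hhu : ∀ c, ∑ a, uup a * h a c = 0)
    (hne : ∃ a b, h a b ≠ 0)
    (hden : ((n : ℝ) - 1) * φ - ω ≠ 0)
    (hghat : ∀ a m, ghat a m =
      (φ * g a m + (φ + ω) * u a * u m) / (((n : ℝ) - 1) * φ - ω))
    (hΔtr : ∀ v, Δtr v = (((n : ℝ) - 1) * φ - ω) * u v) :
    (∀ a m v,
      φ * h m a * u v + χ * h v a * u m + ψ * u a * h m v
        + ω * u a * u m * u v = ghat a m * Δtr v) ↔ (χ = 0 ∧ ψ = 0) := by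
  have key : ∀ a m v, ghat a m * Δtr v = φ * h m a * u v + ω * u a * u m * u v := by
    intro a m v
    rw [hghat, hΔtr, hhsym m a, hh a m]
    rw [div_mul_eq_mul_div, div_eq_iff hden]
    ring
  constructor
  · intro heq
    have h0 : ∀ a m v, χ * h v a * u m + ψ * u a * h m v = 0 := by
      intro a m v
      have := heq a m v
      rw [key] at this
      linarith
    obtain ⟨a0, b0, hab⟩ := hne
    have hχ : χ = 0 := by
      have e1 : ∑ m, uup m * (χ * h a0 b0 * u m + ψ * u b0 * h m a0)
          = χ * h a0 b0 * (∑ m, uup m * u m) + ψ * u b0 * (∑ m, uup m * h m a0) := by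
        rw [Finset.mul_sum, Finset.mul_sum, ← Finset.sum_add_distrib]
        exact Finset.sum_congr rfl fun _ _ => by ring
      rw [hnorm, hhu a0] at e1
      have e2 : ∑ m, uup m * (χ * h a0 b0 * u m + ψ * u b0 * h m a0) = 0 := by
        simp [h0]
      rw [e2] at e1
      have : χ * h a0 b0 = 0 := by linarith
      rcases mul_eq_zero.mp this with h' | h'
      · exact h'
      · exact absurd h' hab
    refine ⟨hχ, ?_⟩
    have h1 : ∀ a m v, ψ * u a * h m v = 0 := by
      intro a m v
      have := h0 a m v
      rw [hχ] at this
      linarith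
    have e1 : ∑ a, uup a * (ψ * u a * h a0 b0)
        = ψ * h a0 b0 * (∑ a, uup a * u a) := by
      rw [Finset.mul_sum]
      exact Finset.sum_congr rfl fun _ _ => by ring
    rw [hnorm] at e1
    have e2 : ∑ a, uup a * (ψ * u a * h a0 b0) = 0 := by simp [h1]
    rw [e2] at e1
    have : ψ * h a0 b0 = 0 := by linarith
    rcases mul_eq_zero.mp this with h' | h'
    · exact h'
    · exact absurd h' hab
  · rintro ⟨hχ, hψ⟩ a m v
    rw [key, hχ, hψ]
    ring
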